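/- arXiv:2002.09244 — 3 statements merged into one kernel-verified Lean document; each statement's English description precedes it below -/
import Mathlib

section
/- If G is a k-tree with k ≥ 2, G ≠ K_k, and v is a simplicial vertex of G, then τ(G − {v}) ≥ τ(G). -/
open SimpleGraph ENNReal

namespace RanTough

/-- Number of connected components after deleting the vertex set `S` from `G`. -/
noncomputable def compCount {V : Type*} (G : SimpleGraph V) (S : Finset V) : ℕ :=
  Nat.card (G.induce ((↑S : Set V)ᶜ)).ConnectedComponent

/-- `G` is `t`-tough: `t * ω(G - S) ≤ |S|` whenever deleting `S` disconnects `G`. -/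
def IsTough {V : Type*} (G : SimpleGraph V) (t : ℝ≥0∞) : Prop :=
  ∀ S : Finset V, 1 < compCount G S → t * compCount G S ≤ S.card

/-- The toughness of `G`: the largest `t` such that `G` is `t`-tough
(`⊤` for complete graphs). -/
noncomputable def toughness {V : Type*} (G : SimpleGraph V) : ℝ≥0∞ :=
  sSup {t : ℝ≥0∞ | IsTough G t}

/-- A vertex is simplicial if its neighborhood is a clique. -/
def IsSimplicial {V : Type*} (G : SimpleGraph V) (v : V) : Prop :=
  G.IsClique (G.neighborSet v)

/-- `G` is a `k`-tree: there is a construction ordering starting from a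
`(k+1)`-clique in which each later vertex is attached to a `k`-clique
of earlier vertices. -/
def IsKTree {V : Type*} [Fintype V] (k : ℕ) (G : SimpleGraph V) : Prop :=
  k + 1 ≤ Fintype.card V ∧
  ∃ e : Fin (Fintype.card V) ≃ V,
    (∀ i j : Fin (Fintype.card V), (i : ℕ) < k + 1 → (j : ℕ) < k + 1 → i ≠ j →
      G.Adj (e i) (e j)) ∧
    (∀ i : Fin (Fintype.card V), k + 1 ≤ (i : ℕ) →
      ∃ S : Finset V, S.card = k ∧ G.IsClique (S : Set V) ∧
        ∀ w : V, (G.Adj (e i) w ∧ ∃ j, j < i ∧ e j = w) ↔ w ∈ S)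

/-- `Q` is a maximal clique of `G`. -/
def IsMaximalClique {V : Type*} (G : SimpleGraph V) (Q : Finset V) : Prop :=
  G.IsClique (Q : Set V) ∧ ∀ R : Finset V, G.IsClique (R : Set V) → Q ⊆ R → Q = R

/-- A clique-tree of `G`: a tree on the maximal cliques of `G` satisfying the
induced subtree property. -/
def IsCliqueTree {V : Type*} (G : SimpleGraph V)
    (T : SimpleGraph {Q : Finset V // IsMaximalClique G Q}) : Prop :=
  T.IsTree ∧ ∀ v : V,
    (T.induce {Q : {Q : Finset V // IsMaximalClique G Q} | v ∈ (Q : Finset V)}).Connected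

/-- A Random Apollonian Network: a uniquely representable (unique clique-tree) 3-tree. -/
def IsRAN {V : Type*} [Fintype V] (G : SimpleGraph V) : Prop :=
  IsKTree 3 G ∧ ∃! T : SimpleGraph {Q : Finset V // IsMaximalClique G Q}, IsCliqueTree G T

/-- `S` separates the nonadjacent vertices `u` and `v`. -/
def IsUVSeparator {V : Type*} (G : SimpleGraph V) (u v : V) (S : Finset V) : Prop :=
  u ≠ v ∧ ¬ G.Adj u v ∧ u ∉ S ∧ v ∉ S ∧ ∀ p : G.Walk u v, ∃ w ∈ p.support, w ∈ S

/-- `S` is a minimal vertex separator of `G`. -/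
def IsMinVtxSep {V : Type*} (G : SimpleGraph V) (S : Finset V) : Prop :=
  ∃ u v : V, IsUVSeparator G u v S ∧ ∀ S' : Finset V, S' ⊂ S → ¬ IsUVSeparator G u v S'

/-- The multiplicity of `S` as a minimal vertex separator with respect to
the clique-tree `T`: the number of edges of `T` whose endpoint intersection is `S`. -/
noncomputable def sepMultiplicity {V : Type*} [DecidableEq V] (G : SimpleGraph V)
    (T : SimpleGraph {Q : Finset V // IsMaximalClique G Q}) (S : Finset V) : ℕ :=
  {e ∈ T.edgeSet | ∃ Q Q' : {Q : Finset V // IsMaximalClique G Q},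
    e = s(Q, Q') ∧ (Q : Finset V) ∩ (Q' : Finset V) = S}.ncard

/-- Degree of a vertex in a graph, via `Set.ncard` (no instances needed). -/
noncomputable def deg {α : Type*} (T : SimpleGraph α) (q : α) : ℕ :=
  {r | T.Adj q r}.ncard

/-- A `k`-regular tree: every vertex that is not a leaf has degree `k`. -/
def IsRegularTree {α : Type*} (k : ℕ) (T : SimpleGraph α) : Prop :=
  T.IsTree ∧ ∀ q : α, deg T q = 1 ∨ deg T q = k

/-- Chordal: every cycle of length at least 4 has a chord. -/
def IsChordal {V : Type*} (G : SimpleGraph V) : Prop :=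
  ∀ (v : V) (c : G.Walk v v), c.IsCycle → 4 ≤ c.length →
    ∃ x y : V, x ∈ c.support ∧ y ∈ c.support ∧ G.Adj x y ∧ s(x, y) ∉ c.edges

/-- `H` is a minor of `G`. -/
def IsMinor {W V : Type*} (H : SimpleGraph W) (G : SimpleGraph V) : Prop :=
  ∃ B : W → Set V,
    (∀ w, (G.induce (B w)).Connected) ∧
    (∀ w₁ w₂, w₁ ≠ w₂ → Disjoint (B w₁) (B w₂)) ∧
    (∀ w₁ w₂, H.Adj w₁ w₂ → ∃ u ∈ B w₁, ∃ v ∈ B w₂, G.Adj u v)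

/-- Planar (Wagner): no `K₅` and no `K₃,₃` minor. -/
def IsPlanar {V : Type*} (G : SimpleGraph V) : Prop :=
  ¬ IsMinor (⊤ : SimpleGraph (Fin 5)) G ∧
  ¬ IsMinor (completeBipartiteGraph (Fin 3) (Fin 3)) G

end RanTough

open RanTough

/-- Walks in `G - S'` between vertices other than `v` can be rerouted around the
simplicial vertex `v`. -/
private lemma ran_reach {V : Type*} [DecidableEq V] {G : SimpleGraph V} {v : V}
    (hv : IsSimplicial G v) (S : Finset {u : V | u ≠ v}) :
    ∀ (n : ℕ) (a b : ((↑(S.image Subtype.val) : Set V)ᶜ : Set V))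
      (p : (G.induce ((↑(S.image Subtype.val) : Set V)ᶜ)).Walk a b),
      p.length ≤ n →
      ∀ (x y : ((↑S : Set {u : V | u ≠ v})ᶜ : Set {u : V | u ≠ v})),
        ((x : {u : V | u ≠ v}) : V) = (a : V) → ((y : {u : V | u ≠ v}) : V) = (b : V) →
        ((G.induce {u : V | u ≠ v}).induce ((↑S : Set {u : V | u ≠ v})ᶜ)).Reachable x y := by
  intro n
  induction n with
  | zero =>
    intro a b p hp x y hx hy
    cases p with
    | nil =>
      have : x = y := by
        apply Subtype.ext; apply Subtype.ext; rw [hx, hy]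
      rw [this]
    | cons h q => simp at hp
  | succ n ih =>
    intro a b p hp x y hx hy
    cases p with
    | nil =>
      have : x = y := by
        apply Subtype.ext; apply Subtype.ext; rw [hx, hy]
      rw [this]
    | cons h q =>
      rename_i c
      by_cases hc : (c : V) = v
      · -- the walk goes through v; look at the next vertex
        cases q with
        | nil =>
          exact absurd (hy.trans hc) (y : {u : V | u ≠ v}).2
        | cons h' q' =>
          rename_i d
          have hd : (d : V) ≠ v := by
            intro hdv
            exact h'.ne' (Subtype.ext (hdv.trans hc.symm))
          have hdS : (⟨(d : V), hd⟩ : {u : V | u ≠ v}) ∈ ((↑S : Set {u : V | u ≠ v})ᶜ) := by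
            intro hmem
            exact d.2 (by
              simp only [Finset.coe_image, Set.mem_image]
              exact ⟨⟨(d : V), hd⟩, hmem, rfl⟩)
          set x' : ((↑S : Set {u : V | u ≠ v})ᶜ : Set {u : V | u ≠ v}) :=
            ⟨⟨(d : V), hd⟩, hdS⟩ with hx'def
          have hreach : ((G.induce {u : V | u ≠ v}).induce
              ((↑S : Set {u : V | u ≠ v})ᶜ)).Reachable x' y := by
            refine ih d b q' ?_ x' y rfl hy
            have : q'.length + 2 ≤ n + 1 := by simpa using hp
            omega
          by_cases hxd : ((x : {u : V | u ≠ v}) : V) = (d : V)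
          · have : x = x' := by
              apply Subtype.ext; apply Subtype.ext; exact hxd
            rw [this]; exact hreach
          · -- x and d are both neighbors of v, hence adjacent (simplicial)
            have hav : G.Adj v ((x : {u : V | u ≠ v}) : V) := by
              have h1 : G.Adj (a : V) (c : V) := h
              rw [hc] at h1
              rw [hx]
              exact h1.symm
            have hdv' : G.Adj v (d : V) := by
              have h1 : G.Adj (c : V) (d : V) := h'
              rw [hc] at h1
              exact h1
            have hadj : G.Adj ((x : {u : V | u ≠ v}) : V) (d : V) :=
              hv hav hdv' hxd
            exact (Adj.reachable (by exact hadj :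
              ((G.induce {u : V | u ≠ v}).induce
                ((↑S : Set {u : V | u ≠ v})ᶜ)).Adj x x')).trans hreach
      · -- the next vertex is not v
        have hcS : (⟨(c : V), hc⟩ : {u : V | u ≠ v}) ∈ ((↑S : Set {u : V | u ≠ v})ᶜ) := by
          intro hmem
          exact c.2 (by
            simp only [Finset.coe_image, Set.mem_image]
            exact ⟨⟨(c : V), hc⟩, hmem, rfl⟩)
        set x' : ((↑S : Set {u : V | u ≠ v})ᶜ : Set {u : V | u ≠ v}) :=
          ⟨⟨(c : V), hc⟩, hcS⟩ with hx'def
        have hreach : ((G.induce {u : V | u ≠ v}).induce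
            ((↑S : Set {u : V | u ≠ v})ᶜ)).Reachable x' y := by
          refine ih c b q ?_ x' y rfl hy
          simpa using hp
        have hadj : G.Adj ((x : {u : V | u ≠ v}) : V) (c : V) := by
          have : G.Adj (a : V) (c : V) := h
          rw [hx]; exact this
        exact (Adj.reachable (by exact hadj :
          ((G.induce {u : V | u ≠ v}).induce
            ((↑S : Set {u : V | u ≠ v})ᶜ)).Adj x x')).trans hreach

/-- Deleting a simplicial vertex of a `k`-tree (`k ≥ 2`) does not decrease toughness. -/
theorem toughness_le_toughness_deleteSimplicial {V : Type*} [Fintype V] [DecidableEq V]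
    (k : ℕ) (hk : 2 ≤ k) (G : SimpleGraph V) (hG : IsKTree k G)
    (v : V) (hv : IsSimplicial G v) :
    toughness G ≤ toughness (G.induce {u : V | u ≠ v}) := by
  apply sSup_le_sSup
  intro t ht
  intro S hS
  set S' : Finset V := S.image Subtype.val with hS'def
  have hcard : S'.card = S.card := Finset.card_image_of_injective _ Subtype.val_injective
  -- the graph hom from (G - v) - S into G - S'
  have hmem : ∀ x : ((↑S : Set {u : V | u ≠ v})ᶜ : Set {u : V | u ≠ v}),
      (((x : {u : V | u ≠ v}) : V)) ∈ ((↑S' : Set V)ᶜ) := by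
    intro x hx
    simp only [hS'def, Finset.coe_image, Set.mem_image] at hx
    obtain ⟨a, ha, hax⟩ := hx
    have : a = (x : {u : V | u ≠ v}) := Subtype.ext hax
    exact x.2 (this ▸ ha)
  let f : ((G.induce {u : V | u ≠ v}).induce ((↑S : Set {u : V | u ≠ v})ᶜ)) →g
      (G.induce ((↑S' : Set V)ᶜ)) :=
    ⟨fun x => ⟨((x : {u : V | u ≠ v}) : V), hmem x⟩, fun {x y} h => h⟩
  have hinj : Function.Injective (SimpleGraph.ConnectedComponent.map f) := by
    intro c d
    refine SimpleGraph.ConnectedComponent.ind₂ (fun x y hxy => ?_) c d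
    simp only [SimpleGraph.ConnectedComponent.map_mk] at hxy
    have hr : (G.induce ((↑S' : Set V)ᶜ)).Reachable (f x) (f y) :=
      (SimpleGraph.ConnectedComponent.eq).mp hxy
    obtain ⟨p⟩ := hr
    exact SimpleGraph.ConnectedComponent.sound
      (ran_reach hv S p.length (f x) (f y) p le_rfl x y rfl rfl)
  have hle : compCount (G.induce {u : V | u ≠ v}) S ≤ compCount G S' :=
    Nat.card_le_card_of_injective _ hinj
  have h1 : 1 < compCount G S' := lt_of_lt_of_le hS hle
  calc t * (compCount (G.induce {u : V | u ≠ v}) S : ℝ≥0∞)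
      ≤ t * (compCount G S' : ℝ≥0∞) := mul_le_mul_right (Nat.cast_le.mpr hle) t
    _ ≤ (S'.card : ℝ≥0∞) := ht S' h1
    _ = (S.card : ℝ≥0∞) := by rw [hcard]
end

section
/- If G is a k-tree with k ≥ 2, G ≠ K_k, and SI is the set of simplicial vertices of G, then τ(G − SI) ≥ τ(G). -/
open SimpleGraph ENNReal

open RanTough

/-- Any walk staying inside `Wb` between two vertices of `W'` can be shortcut to a walk
staying inside `W'`, provided every vertex of `Wb \ W'` has a clique neighborhood. -/
lemma shortcut_walk {V : Type*} (G : SimpleGraph V) (Wb W' : Set V)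
    (hcl : ∀ v ∈ Wb, v ∉ W' → G.IsClique (G.neighborSet v)) :
    ∀ (n : ℕ) ⦃x y : V⦄, x ∈ W' → y ∈ W' →
      ∀ p : G.Walk x y, p.length ≤ n → (∀ v ∈ p.support, v ∈ Wb) →
      ∃ q : G.Walk x y, ∀ v ∈ q.support, v ∈ W' := by
  intro n
  induction n with
  | zero =>
    intro x y hx hy p hl hs
    cases p with
    | nil => exact ⟨.nil, by simpa using hx⟩
    | cons h q => simp [SimpleGraph.Walk.length_cons] at hl
  | succ n ih =>
    intro x y hx hy p hl hs
    cases p with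
    | nil => exact ⟨.nil, by simpa using hx⟩
    | cons h q =>
      rename_i z
      by_cases hz : z ∈ W'
      · obtain ⟨q', hq'⟩ := ih hz hy q
          (by simp [SimpleGraph.Walk.length_cons] at hl; omega)
          (fun v hv => hs v (by simp [hv]))
        refine ⟨.cons h q', ?_⟩
        intro v hv
        rcases (by simpa using hv : v = x ∨ v ∈ q'.support) with rfl | hv
        · exact hx
        · exact hq' v hv
      · have hzWb : z ∈ Wb := hs z (by simp)
        cases q with
        | nil => exact absurd hy hz
        | cons h2 r =>
          rename_i w
          by_cases hxw : x = w
          · subst hxw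
            exact ih hx hy r
              (by simp [SimpleGraph.Walk.length_cons] at hl ⊢; omega)
              (fun v hv => hs v (by simp [hv]))
          · have hadj : G.Adj x w :=
              hcl z hzWb hz (by simpa using h.symm) (by simpa using h2) hxw
            refine ih hx hy (.cons hadj r)
              (by simp [SimpleGraph.Walk.length_cons] at hl ⊢; omega) ?_
            intro v hv
            rcases (by simpa using hv : v = x ∨ v ∈ r.support) with rfl | hv
            · exact hs v (by simp)
            · exact hs v (by simp [hv])

/-- A walk in `G` whose support lies in `A` and avoids `S'` lifts to reachability
in the doubly induced subgraph. -/
lemma lift_walk {V : Type*} (G : SimpleGraph V) (A : Set V) (S' : Finset ↥A) :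
    ∀ ⦃x y : V⦄ (q : G.Walk x y),
      (∀ v ∈ q.support, ∃ h : v ∈ A, (⟨v, h⟩ : ↥A) ∉ S') →
      ∀ (hx : x ∈ A) (hx' : (⟨x, hx⟩ : ↥A) ∈ ((↑S' : Set ↥A)ᶜ))
        (hy : y ∈ A) (hy' : (⟨y, hy⟩ : ↥A) ∈ ((↑S' : Set ↥A)ᶜ)),
      ((G.induce A).induce ((↑S' : Set ↥A)ᶜ)).Reachable ⟨⟨x, hx⟩, hx'⟩ ⟨⟨y, hy⟩, hy'⟩ := by
  intro x y q
  induction q with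
  | nil =>
    intro _ hx hx' hy hy'
    exact SimpleGraph.Reachable.refl _
  | cons h p ih =>
    rename_i u v w
    intro hs hx hx' hy hy'
    obtain ⟨hvA, hvS⟩ := hs v (by simp)
    have hv' : (⟨v, hvA⟩ : ↥A) ∈ ((↑S' : Set ↥A)ᶜ) := by simpa using hvS
    have hadj : ((G.induce A).induce ((↑S' : Set ↥A)ᶜ)).Adj ⟨⟨u, hx⟩, hx'⟩ ⟨⟨v, hvA⟩, hv'⟩ := by
      simpa using h
    exact hadj.reachable.trans (ih (fun z hz => hs z (by simp [hz])) hvA hv' hy hy')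

/-- Deleting the set of all simplicial vertices of a `k`-tree (`k ≥ 2`) does not
decrease toughness (assuming some non-simplicial vertex remains). -/
theorem toughness_le_toughness_deleteAllSimplicial {V : Type*} [Fintype V] [DecidableEq V]
    (k : ℕ) (hk : 2 ≤ k) (G : SimpleGraph V) (hG : IsKTree k G)
    (hne : ∃ u : V, ¬ IsSimplicial G u) :
    toughness G ≤ toughness (G.induce {u : V | ¬ IsSimplicial G u}) := by
  classical
  set A : Set V := {u : V | ¬ IsSimplicial G u} with hAdef
  apply sSup_le_sSup
  intro t ht
  intro S' hc'
  set S : Finset V := S'.image Subtype.val with hSdef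
  have hcard : S.card = S'.card := Finset.card_image_of_injective _ Subtype.val_injective
  -- the homomorphism between the deleted graphs
  have hmem : ∀ v : ↥((↑S' : Set ↥A)ᶜ), ((v : ↥A) : V) ∈ ((↑S : Set V)ᶜ) := by
    intro v
    intro hvS
    rw [hSdef] at hvS
    simp only [Finset.coe_image, Set.mem_image, Finset.mem_coe] at hvS
    obtain ⟨a, haS, hav⟩ := hvS
    have : a = (v : ↥A) := Subtype.ext hav
    subst this
    exact v.2 (by simpa using haS)
  let ψ : ((G.induce A).induce ((↑S' : Set ↥A)ᶜ)) →g (G.induce ((↑S : Set V)ᶜ)) :=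
    ⟨fun v => ⟨((v : ↥A) : V), hmem v⟩, fun {a b} h => by
      simp only [SimpleGraph.comap_adj, Function.Embedding.coe_subtype] at h ⊢
      exact h⟩
  have hinj : Function.Injective (SimpleGraph.ConnectedComponent.map ψ) := by
    intro c d hcd
    obtain ⟨a, rfl⟩ := c.exists_rep
    obtain ⟨b, rfl⟩ := d.exists_rep
    have hcd' : (G.induce ((↑S : Set V)ᶜ)).connectedComponentMk (ψ a) =
        (G.induce ((↑S : Set V)ᶜ)).connectedComponentMk (ψ b) := hcd
    rw [SimpleGraph.ConnectedComponent.eq] at hcd'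
    obtain ⟨p⟩ := hcd'
    -- push walk down to G
    let homVal : (G.induce ((↑S : Set V)ᶜ)) →g G :=
      ⟨Subtype.val, fun {a b} h => by
        simpa using h⟩
    have hsupp : ∀ v ∈ (p.map homVal).support, v ∈ ((↑S : Set V)ᶜ) := by
      intro v hv
      rw [SimpleGraph.Walk.support_map, List.mem_map] at hv
      obtain ⟨u, _, rfl⟩ := hv
      exact u.2
    have hcl : ∀ v ∈ ((↑S : Set V)ᶜ), v ∉ (A ∩ (↑S : Set V)ᶜ) → G.IsClique (G.neighborSet v) := by
      intro v hv hv'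
      have hvA : v ∉ A := by
        intro hvA; exact hv' ⟨hvA, hv⟩
      have : IsSimplicial G v := by
        rw [hAdef] at hvA
        simpa using hvA
      exact this
    have haW : ((a : ↥A) : V) ∈ (A ∩ (↑S : Set V)ᶜ) := ⟨(a : ↥A).2, hmem a⟩
    have hbW : ((b : ↥A) : V) ∈ (A ∩ (↑S : Set V)ᶜ) := ⟨(b : ↥A).2, hmem b⟩
    obtain ⟨q, hq⟩ := shortcut_walk G ((↑S : Set V)ᶜ) (A ∩ (↑S : Set V)ᶜ) hcl
      (p.map homVal).length haW hbW (p.map homVal) le_rfl hsupp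
    have hreach := lift_walk G A S' q
      (fun v hv => by
        obtain ⟨hvA, hvS⟩ := hq v hv
        refine ⟨hvA, fun hmem' => hvS ?_⟩
        rw [hSdef]
        simp only [Finset.coe_image, Set.mem_image, Finset.mem_coe]
        exact ⟨⟨v, hvA⟩, hmem', rfl⟩)
      (a : ↥A).2 (by simpa using a.2) (b : ↥A).2 (by simpa using b.2)
    have hea : (⟨⟨((a : ↥A) : V), (a : ↥A).2⟩, by simpa using a.2⟩ :
        ↥((↑S' : Set ↥A)ᶜ)) = a := by
      apply Subtype.ext; apply Subtype.ext; rfl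
    have heb : (⟨⟨((b : ↥A) : V), (b : ↥A).2⟩, by simpa using b.2⟩ :
        ↥((↑S' : Set ↥A)ᶜ)) = b := by
      apply Subtype.ext; apply Subtype.ext; rfl
    rw [hea, heb] at hreach
    exact SimpleGraph.ConnectedComponent.sound hreach
  have hle : compCount (G.induce A) S' ≤ compCount G S :=
    Nat.card_le_card_of_injective _ hinj
  have hc : 1 < compCount G S := lt_of_lt_of_le hc' hle
  calc t * (compCount (G.induce A) S' : ℝ≥0∞)
      ≤ t * (compCount G S : ℝ≥0∞) := by
        exact mul_le_mul_right (by exact_mod_cast hle) t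
    _ ≤ (S.card : ℝ≥0∞) := ht S hc
    _ = (S'.card : ℝ≥0∞) := by rw [hcard]
end

section
/- Let G be a non-complete RAN and T its (unique) clique-tree. Then T has n − 3 vertices and n − 4 edges, the number of leaves of T equals the number of simplicial vertices of G, every vertex of G belonging only to maximal cliques that are internal vertices of T lies in some minimal vertex separator, and every vertex of T has degree at most 4. -/
open SimpleGraph ENNReal

open RanTough

/-!
The maximal cliques of a `k`-tree are its initial `(k + 1)`-clique and, for each later vertex,
that vertex together with its `k` earlier neighbours: there are `n - k` of them, all of size
`k + 1`. Deleting fewer than `k` vertices leaves a `k`-tree connected, since every remaining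
vertex reaches the initial clique through earlier neighbours.

In a clique tree, the induced-subtree property makes the intersection of adjacent cliques
`Q, Q'` separate `Q \ Q'` from `Q' \ Q`; in a `k`-tree it therefore has exactly `k` vertices and
is a minimal separator. If two neighbours `Q₁, Q₂` of `Q` had `Q ∩ Q₂ ⊆ Q₁`, replacing the edge
`Q Q₂` by `Q₁ Q₂` would give a second clique tree. So when the clique tree is unique, the
neighbours of `Q` are determined by distinct `k`-subsets of `Q` (degree at most `k + 1`), and a
clique containing a simplicial vertex `v` is a leaf, as all its neighbours meet it in `Q \ {v}`.
Conversely, the one vertex of a leaf missing from its neighbour lies in no other maximal clique,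
hence is simplicial.
-/

lemma SimpleGraph.Reachable.of_forall_adj {α : Type*} {A B : SimpleGraph α}
    (h : ∀ ⦃x y⦄, A.Adj x y → B.Reachable x y) {x y : α} (hxy : A.Reachable x y) :
    B.Reachable x y := by
  rw [reachable_iff_reflTransGen] at hxy
  induction hxy with
  | refl => rfl
  | tail _ hbc ih => exact ih.trans (h hbc)

lemma SimpleGraph.Connected.of_forall_adj {α : Type*} {A B : SimpleGraph α} (hA : A.Connected)
    (h : ∀ ⦃x y⦄, A.Adj x y → B.Reachable x y) : B.Connected :=
  haveI := hA.nonempty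
  ⟨fun x y => (hA.preconnected x y).of_forall_adj h⟩

lemma SimpleGraph.Reachable.exists_walk_support_subset {V : Type*} {G : SimpleGraph V}
    {s : Set V} {a b : s} (h : (G.induce s).Reachable a b) :
    ∃ p : G.Walk a b, ∀ x ∈ p.support, x ∈ s := by
  obtain ⟨p⟩ := h
  refine ⟨p.map (Embedding.induce s).toHom, fun x hx => ?_⟩
  obtain ⟨y, -, rfl⟩ := List.mem_map.1 ((Walk.support_map _ p) ▸ hx)
  exact y.2

namespace RanTough

variable {V : Type*} {G : SimpleGraph V}

abbrev MaxClique (G : SimpleGraph V) := {Q : Finset V // IsMaximalClique G Q}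

lemma isMaximalClique_iff_maximal {Q : Finset V} :
    IsMaximalClique G Q ↔ Maximal (fun R : Finset V => G.IsClique (R : Set V)) Q :=
  ⟨fun h => ⟨h.1, fun _ hR hQR => (h.2 _ hR hQR).ge⟩,
    fun h => ⟨h.1, fun _ hR hQR => le_antisymm hQR (h.2 hR hQR)⟩⟩

lemma exists_isMaximalClique_superset [Finite V] {C : Finset V} (hC : G.IsClique (C : Set V)) :
    ∃ Q, IsMaximalClique G Q ∧ C ⊆ Q := by
  obtain ⟨Q, hCQ, hQ⟩ :=
    Finite.exists_le_maximal (p := fun R : Finset V => G.IsClique (R : Set V)) hC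
  exact ⟨Q, isMaximalClique_iff_maximal.2 hQ, hCQ⟩

lemma exists_isMaximalClique_mem [Finite V] (v : V) : ∃ Q, IsMaximalClique G Q ∧ v ∈ Q := by
  obtain ⟨Q, hQ, hvQ⟩ := exists_isMaximalClique_superset (G := G) (C := {v}) (by simp)
  exact ⟨Q, hQ, hvQ (Finset.mem_singleton_self v)⟩

lemma exists_isMaximalClique_mem_mem [Finite V] [DecidableEq V] {u v : V} (huv : G.Adj u v) :
    ∃ Q, IsMaximalClique G Q ∧ u ∈ Q ∧ v ∈ Q := by
  obtain ⟨Q, hQ, huvQ⟩ := exists_isMaximalClique_superset (G := G) (C := {u, v})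
    (by simpa using isClique_pair.2 fun _ => huv)
  exact ⟨Q, hQ, huvQ (by simp), huvQ (by simp)⟩

lemma MaxClique.exists_mem_notMem_of_ne {Q Q' : MaxClique G} (hne : Q ≠ Q') :
    ∃ u, u ∈ Q.1 ∧ u ∉ Q'.1 := by
  by_contra! h
  exact hne (Subtype.ext (Q.2.2 _ Q'.2.1 h))

lemma IsSimplicial.coe_eq_insert_neighborSet [Finite V] {v : V} (hv : IsSimplicial G v)
    {Q : Finset V} (hQ : IsMaximalClique G Q) (hvQ : v ∈ Q) :
    (Q : Set V) = insert v (G.neighborSet v) := by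
  have hN : G.IsClique (insert v (G.neighborSet v)) := hv.insert fun w hw _ => hw
  have hQN : (Q : Set V) ⊆ insert v (G.neighborSet v) := fun w hw => by
    rcases eq_or_ne v w with rfl | hvw
    · exact Set.mem_insert _ _
    · exact Set.mem_insert_of_mem _ (hQ.1 hvQ hw hvw)
  have hfin := Set.toFinite (insert v (G.neighborSet v))
  rw [← hfin.coe_toFinset] at hN hQN ⊢
  rw [hQ.2 _ hN (Finset.coe_subset.1 hQN)]

lemma IsSimplicial.eq_of_isMaximalClique [Finite V] {v : V} (hv : IsSimplicial G v)
    {Q R : Finset V} (hQ : IsMaximalClique G Q) (hR : IsMaximalClique G R) (hvQ : v ∈ Q)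
    (hvR : v ∈ R) : Q = R :=
  Finset.coe_injective <| by
    rw [hv.coe_eq_insert_neighborSet hQ hvQ, hv.coe_eq_insert_neighborSet hR hvR]

lemma isSimplicial_of_forall_isMaximalClique_eq [Finite V] [DecidableEq V] {v : V}
    {Q : Finset V} (hQ : IsMaximalClique G Q)
    (h : ∀ R, IsMaximalClique G R → v ∈ R → R = Q) : IsSimplicial G v := by
  intro x hx y hy hxy
  obtain ⟨Rx, hRx, hvRx, hxRx⟩ := exists_isMaximalClique_mem_mem (G := G) hx
  obtain ⟨Ry, hRy, hvRy, hyRy⟩ := exists_isMaximalClique_mem_mem (G := G) hy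
  exact hQ.1 (h Rx hRx hvRx ▸ hxRx) (h Ry hRy hvRy ▸ hyRy) hxy

lemma deg_eq_one_iff {α : Type*} {T : SimpleGraph α} {q : α} :
    deg T q = 1 ↔ ∃ r, T.Adj q r ∧ ∀ r', T.Adj q r' → r' = r := by
  rw [deg, Set.ncard_eq_one]
  exact exists_congr fun r => Set.eq_singleton_iff_unique_mem

namespace IsCliqueTree

variable {T : SimpleGraph (MaxClique G)} (hT : IsCliqueTree G T)
include hT

lemma exists_adj_mem {x : V} {Q R : MaxClique G} (hxQ : x ∈ Q.1) (hxR : x ∈ R.1)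
    (hne : Q ≠ R) : ∃ Q', T.Adj Q Q' ∧ x ∈ Q'.1 := by
  obtain ⟨c, hc⟩ := ((hT.2 x).preconnected ⟨Q, hxQ⟩ ⟨R, hxR⟩).nonempty_neighborSet_left
    (by simpa using hne)
  exact ⟨c, hc, c.2⟩

variable [DecidableEq V]

lemma reachable_deleteEdges_of_notMem_inter {Q Q' R R' : MaxClique G} {x : V}
    (hxR : x ∈ R.1) (hxR' : x ∈ R'.1) (hx : x ∉ Q.1 ∩ Q'.1) :
    (T.deleteEdges {s(Q, Q')}).Reachable R R' := by
  let f : T.induce {q | x ∈ q.1} →g T.deleteEdges {s(Q, Q')} :=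
    ⟨Subtype.val, fun {a b} hab => by
      refine (deleteEdges_adj ..).2 ⟨hab, fun he => hx ?_⟩
      rcases Sym2.eq_iff.1 he with ⟨rfl, rfl⟩ | ⟨rfl, rfl⟩
      · exact Finset.mem_inter.2 ⟨a.2, b.2⟩
      · exact Finset.mem_inter.2 ⟨b.2, a.2⟩⟩
  exact ((hT.2 x).preconnected ⟨R, hxR⟩ ⟨R', hxR'⟩).map f

omit [DecidableEq V] in
lemma not_reachable_deleteEdges {Q Q' : MaxClique G} (hadj : T.Adj Q Q') :
    ¬ (T.deleteEdges {s(Q, Q')}).Reachable Q Q' :=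
  isBridge_iff.1 (isAcyclic_iff_forall_adj_isBridge.1 hT.1.isAcyclic hadj)

variable {Q Q₁ Q₂ : MaxClique G}

lemma isCliqueTree_deleteEdges_sup_edge (h₁ : T.Adj Q Q₁) (h₂ : T.Adj Q Q₂) (hne : Q₁ ≠ Q₂)
    (hsub : Q.1 ∩ Q₂.1 ⊆ Q₁.1) :
    IsCliqueTree G (T.deleteEdges {s(Q, Q₂)} ⊔ edge Q₁ Q₂) := by
  set D := T.deleteEdges {s(Q, Q₂)}
  set T' := D ⊔ edge Q₁ Q₂
  have hD₁ : D.Adj Q Q₁ := (deleteEdges_adj ..).2 ⟨h₁, by simp [hne, h₂.ne]⟩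
  have hQ₁ : T'.Adj Q Q₁ := Or.inl hD₁
  have h₁₂ : T'.Adj Q₁ Q₂ := Or.inr ((edge_adj ..).2 ⟨Or.inl ⟨rfl, rfl⟩, hne⟩)
  -- each edge of `T` is an edge of `T'` or is bypassed through `Q₁`
  have hstep : ∀ ⦃a b⦄, T.Adj a b →
      T'.Adj a b ∨ T'.Adj a Q₁ ∧ T'.Adj Q₁ b ∧ a.1 ∩ b.1 ⊆ Q₁.1 := fun a b hab => by
    by_cases he : s(a, b) = s(Q, Q₂)
    · rcases Sym2.eq_iff.1 he with ⟨rfl, rfl⟩ | ⟨rfl, rfl⟩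
      · exact Or.inr ⟨hQ₁, h₁₂, hsub⟩
      · exact Or.inr ⟨h₁₂.symm, hQ₁.symm, Finset.inter_comm a.1 b.1 ▸ hsub⟩
    · exact Or.inl (Or.inl ((deleteEdges_adj ..).2 ⟨hab, he⟩))
  have hD : ¬ D.Reachable Q₁ Q₂ := fun h =>
    hT.not_reachable_deleteEdges h₂ (hD₁.reachable.trans h)
  refine ⟨⟨hT.1.connected.of_forall_adj fun a b hab => ?_,
    (hT.1.isAcyclic.anti (deleteEdges_le _)).sup_edge_of_not_reachable hD⟩,
    fun v => (hT.2 v).of_forall_adj fun a b hab => ?_⟩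
  · rcases hstep hab with h | ⟨ha, hb, -⟩
    · exact h.reachable
    · exact ha.reachable.trans hb.reachable
  · rcases hstep hab with h | ⟨ha, hb, hab₁⟩
    · exact Adj.reachable (induce_adj.2 h)
    · have hv : v ∈ Q₁.1 := hab₁ (Finset.mem_inter.2 ⟨a.2, b.2⟩)
      exact (Adj.reachable (v := ⟨Q₁, hv⟩) (induce_adj.2 ha)).trans
        (Adj.reachable (induce_adj.2 hb))

lemma eq_of_adj_of_inter_subset (hU : ∃! T : SimpleGraph (MaxClique G), IsCliqueTree G T)
    (h₁ : T.Adj Q Q₁) (h₂ : T.Adj Q Q₂) (hsub : Q.1 ∩ Q₂.1 ⊆ Q₁.1) : Q₁ = Q₂ := by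
  by_contra hne
  have hT' := hT.isCliqueTree_deleteEdges_sup_edge h₁ h₂ hne hsub
  have h₂' := hU.unique hT hT' ▸ h₂
  rcases h₂' with h | h
  · exact ((deleteEdges_adj ..).1 h).2 rfl
  · rcases ((edge_adj ..).1 h).1 with ⟨h, -⟩ | ⟨h, -⟩
    · exact h₁.ne h
    · exact h₂.ne h

variable [Finite V]

lemma reachable_deleteEdges_of_walk {Q Q' : MaxClique G} {a b : V} (p : G.Walk a b)
    (hp : ∀ x ∈ p.support, x ∉ Q.1 ∩ Q'.1) {R R' : MaxClique G} (haR : a ∈ R.1)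
    (hbR' : b ∈ R'.1) : (T.deleteEdges {s(Q, Q')}).Reachable R R' := by
  induction p generalizing R with
  | nil => exact hT.reachable_deleteEdges_of_notMem_inter haR hbR' (hp _ (by simp))
  | @cons a c b hac p ih =>
    obtain ⟨C, hC, haC, hcC⟩ := exists_isMaximalClique_mem_mem hac
    exact (hT.reachable_deleteEdges_of_notMem_inter (Q' := Q') (R' := ⟨C, hC⟩) haR haC
      (hp a (by simp))).trans (ih (fun x hx => hp x (by simp [hx])) (R := ⟨C, hC⟩) hcC hbR')

lemma isUVSeparator_inter {Q Q' : MaxClique G} (hadj : T.Adj Q Q') {u w : V}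
    (hu : u ∈ Q.1) (hu' : u ∉ Q'.1) (hw : w ∈ Q'.1) (hw' : w ∉ Q.1) :
    IsUVSeparator G u w (Q.1 ∩ Q'.1) := by
  have hsep : ∀ p : G.Walk u w, ∃ x ∈ p.support, x ∈ Q.1 ∩ Q'.1 := fun p => by
    by_contra! hp
    exact hT.not_reachable_deleteEdges hadj (hT.reachable_deleteEdges_of_walk p hp hu hw)
  refine ⟨fun h => hw' (h ▸ hu), fun h => ?_, fun h => hu' (Finset.mem_inter.1 h).2,
    fun h => hw' (Finset.mem_inter.1 h).1, hsep⟩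
  obtain ⟨x, hx, hxQ⟩ := hsep h.toWalk
  rw [h.support_toWalk, List.mem_cons, List.mem_singleton] at hx
  rcases hx with rfl | rfl
  · exact hu' (Finset.mem_inter.1 hxQ).2
  · exact hw' (Finset.mem_inter.1 hxQ).1

lemma exists_isUVSeparator_inter {Q Q' : MaxClique G} (hadj : T.Adj Q Q') :
    ∃ u w, IsUVSeparator G u w (Q.1 ∩ Q'.1) := by
  obtain ⟨u, hu, hu'⟩ := MaxClique.exists_mem_notMem_of_ne hadj.ne
  obtain ⟨w, hw, hw'⟩ := MaxClique.exists_mem_notMem_of_ne hadj.ne.symm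
  exact ⟨u, w, hT.isUVSeparator_inter hadj hu hu' hw hw'⟩

end IsCliqueTree

section KTree

variable [Fintype V] (G) (e : Fin (Fintype.card V) ≃ V) (k : ℕ)

def initialClique : Finset V := {v | (e.symm v : ℕ) < k + 1}

open Classical in
noncomputable def earlierNeighbors (v : V) : Finset V := {w | G.Adj v w ∧ e.symm w < e.symm v}

structure IsKTreeOrder : Prop where
  le_card : k + 1 ≤ Fintype.card V
  isClique_initialClique : G.IsClique (initialClique e k : Set V)
  card_earlierNeighbors : ∀ v, k + 1 ≤ (e.symm v : ℕ) → (earlierNeighbors G e v).card = k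
  isClique_earlierNeighbors :
    ∀ v, k + 1 ≤ (e.symm v : ℕ) → G.IsClique (earlierNeighbors G e v : Set V)

noncomputable def creationClique [DecidableEq V] (v : V) : Finset V :=
  if (e.symm v : ℕ) < k + 1 then initialClique e k else insert v (earlierNeighbors G e v)

variable {G e k}

@[simp] lemma mem_initialClique {v : V} : v ∈ initialClique e k ↔ (e.symm v : ℕ) < k + 1 := by
  simp [initialClique]

@[simp] lemma mem_earlierNeighbors {v w : V} :
    w ∈ earlierNeighbors G e v ↔ G.Adj v w ∧ e.symm w < e.symm v := by
  simp [earlierNeighbors]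

lemma IsKTree.exists_isKTreeOrder (h : IsKTree k G) : ∃ e, IsKTreeOrder G e k := by
  obtain ⟨hle, e, hinit, hlater⟩ := h
  refine ⟨e, hle, fun x hx y hy hxy => ?_, fun v hv => ?_, fun v hv => ?_⟩
  · simpa using hinit (e.symm x) (e.symm y) (mem_initialClique.1 hx) (mem_initialClique.1 hy)
      (by simpa using hxy)
  all_goals
    obtain ⟨S, hS, hSc, hSiff⟩ := hlater (e.symm v) hv
    have : earlierNeighbors G e v = S := by
      ext w
      rw [mem_earlierNeighbors, ← hSiff, e.apply_symm_apply]
      exact and_congr_right' ⟨fun hw => ⟨_, hw, e.apply_symm_apply w⟩,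
        by rintro ⟨j, hj, rfl⟩; simpa using hj⟩
  · rw [this, hS]
  · rwa [this]

namespace IsKTreeOrder

variable (h : IsKTreeOrder G e k)
include h

lemma card_initialClique : (initialClique e k).card = k + 1 := by
  rw [Finset.card_equiv e.symm (t := {i : Fin _ | (i : ℕ) < k + 1}) (by simp),
    Fin.card_filter_val_lt, min_eq_right h.le_card]

lemma lt_card_of_ne_top (hG : G ≠ ⊤) : k + 1 < Fintype.card V := by
  refine (h.le_card).lt_of_ne fun hcard => hG (isClique_univ.1 ?_)
  convert h.isClique_initialClique
  ext v
  simp [hcard]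

lemma connected_induce_compl {X : Finset V} (hX : X.card < k) :
    (G.induce (X : Set V)ᶜ).Connected := by
  have reach : ∀ n, ∀ v (hv : v ∉ X), (e.symm v : ℕ) = n → ∃ u, ∃ hu : u ∉ X,
      u ∈ initialClique e k ∧ (G.induce (X : Set V)ᶜ).Reachable ⟨v, hv⟩ ⟨u, hu⟩ := by
    intro n
    induction n using Nat.strong_induction_on with
    | _ n ih =>
      intro v hv hvn
      by_cases hvk : (e.symm v : ℕ) < k + 1
      · exact ⟨v, hv, mem_initialClique.2 hvk, .rfl⟩
      obtain ⟨w, hw, hwX⟩ := Finset.exists_mem_notMem_of_card_lt_card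
        (hX.trans_eq (h.card_earlierNeighbors v (by omega)).symm)
      obtain ⟨hvw, hwv⟩ := mem_earlierNeighbors.1 hw
      obtain ⟨u, hu, hui, hwu⟩ := ih _ (hvn ▸ hwv) w hwX rfl
      exact ⟨u, hu, hui, (Adj.reachable (v := ⟨w, hwX⟩) (induce_adj.2 hvw)).trans hwu⟩
  obtain ⟨u₀, hu₀, hu₀X⟩ := Finset.exists_mem_notMem_of_card_lt_card
    (hX.trans (Nat.lt_succ_self k) |>.trans_eq h.card_initialClique.symm)
  have : Nonempty ↥((X : Set V)ᶜ) := ⟨⟨u₀, hu₀X⟩⟩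
  refine ⟨fun ⟨a, ha⟩ ⟨b, hb⟩ => ?_⟩
  obtain ⟨u, hu, hui, hau⟩ := reach _ a ha rfl
  obtain ⟨w, hw, hwi, hbw⟩ := reach _ b hb rfl
  refine hau.trans (Reachable.trans ?_ hbw.symm)
  rcases eq_or_ne u w with rfl | huw
  · rfl
  · exact Adj.reachable (induce_adj.2 (h.isClique_initialClique hui hwi huw))

lemma le_card_of_isUVSeparator {u w : V} {S : Finset V} (hS : IsUVSeparator G u w S) :
    k ≤ S.card := by
  by_contra! hlt
  obtain ⟨p, hp⟩ := ((h.connected_induce_compl hlt).preconnected ⟨u, hS.2.2.1⟩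
    ⟨w, hS.2.2.2.1⟩).exists_walk_support_subset
  obtain ⟨x, hx, hxS⟩ := hS.2.2.2.2 p
  exact hp x hx hxS

lemma isMinVtxSep_of_isUVSeparator {u w : V} {S : Finset V} (hS : IsUVSeparator G u w S)
    (hcard : S.card = k) : IsMinVtxSep G S :=
  ⟨u, w, hS, fun _ hS' hsep =>
    (h.le_card_of_isUVSeparator hsep).not_gt (hcard ▸ Finset.card_lt_card hS')⟩

end IsKTreeOrder

variable [DecidableEq V]

lemma mem_creationClique_self (v : V) : v ∈ creationClique G e k v := by
  unfold creationClique
  split_ifs with hv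
  · exact mem_initialClique.2 hv
  · exact Finset.mem_insert_self v _

lemma le_of_mem_creationClique {v w : V} (hv : k ≤ (e.symm v : ℕ))
    (hw : w ∈ creationClique G e k v) : e.symm w ≤ e.symm v := by
  unfold creationClique at hw
  split_ifs at hw
  · have := mem_initialClique.1 hw
    exact Fin.le_def.2 (by omega)
  · rcases Finset.mem_insert.1 hw with rfl | hw
    · exact le_rfl
    · exact (mem_earlierNeighbors.1 hw).2.le

lemma subset_creationClique {C : Finset V} (hC : G.IsClique (C : Set V)) {v : V} (hvC : v ∈ C)
    (htop : ∀ w ∈ C, e.symm w ≤ e.symm v) : C ⊆ creationClique G e k v := fun w hw => by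
  unfold creationClique
  split_ifs with hv
  · exact mem_initialClique.2 (lt_of_le_of_lt (Fin.le_def.1 (htop w hw)) hv)
  · rcases eq_or_ne v w with rfl | hvw
    · exact Finset.mem_insert_self v _
    · exact Finset.mem_insert_of_mem (mem_earlierNeighbors.2
        ⟨hC hvC hw hvw, lt_of_le_of_ne (htop w hw) (e.symm.injective.ne hvw.symm)⟩)

lemma creationClique_eq_initialClique {v : V} (hv : (e.symm v : ℕ) < k + 1) :
    creationClique G e k v = initialClique e k :=
  if_pos hv

lemma injOn_creationClique :
    Set.InjOn (creationClique G e k) {v | k ≤ (e.symm v : ℕ)} := fun v hv w hw hvw =>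
  e.symm.injective <| le_antisymm
    (le_of_mem_creationClique hw (hvw ▸ mem_creationClique_self v))
    (le_of_mem_creationClique hv (hvw ▸ mem_creationClique_self w))

namespace IsKTreeOrder

variable (h : IsKTreeOrder G e k)
include h

lemma isClique_creationClique (v : V) : G.IsClique (creationClique G e k v : Set V) := by
  unfold creationClique
  split_ifs with hv
  · exact h.isClique_initialClique
  · rw [Finset.coe_insert]
    exact (h.isClique_earlierNeighbors v (by omega)).insert
      fun w hw _ => (mem_earlierNeighbors.1 hw).1

lemma card_creationClique (v : V) : (creationClique G e k v).card = k + 1 := by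
  unfold creationClique
  split_ifs with hv
  · exact h.card_initialClique
  · rw [Finset.card_insert_of_notMem (fun hv' => (mem_earlierNeighbors.1 hv').2.false),
      h.card_earlierNeighbors v (by omega)]

lemma exists_subset_creationClique {C : Finset V} (hC : G.IsClique (C : Set V)) :
    ∃ v, k ≤ (e.symm v : ℕ) ∧ C ⊆ creationClique G e k v := by
  set vₖ := e ⟨k, by have := h.le_card; omega⟩
  have hvₖ : (e.symm vₖ : ℕ) = k := by simp [vₖ]
  rcases C.eq_empty_or_nonempty with rfl | hne
  · exact ⟨vₖ, hvₖ.ge, Finset.empty_subset _⟩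
  obtain ⟨v, hvC, htop⟩ := C.exists_max_image e.symm hne
  by_cases hv : k ≤ (e.symm v : ℕ)
  · exact ⟨v, hv, subset_creationClique hC hvC htop⟩
  · refine ⟨vₖ, hvₖ.ge, ?_⟩
    rw [creationClique_eq_initialClique (by omega : (e.symm vₖ : ℕ) < k + 1),
      ← creationClique_eq_initialClique (by omega : (e.symm v : ℕ) < k + 1)]
    exact subset_creationClique hC hvC htop

lemma card_le_of_isClique {C : Finset V} (hC : G.IsClique (C : Set V)) : C.card ≤ k + 1 := by
  obtain ⟨v, -, hsub⟩ := h.exists_subset_creationClique hC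
  exact (Finset.card_le_card hsub).trans_eq (h.card_creationClique v)

lemma isMaximalClique_creationClique (v : V) : IsMaximalClique G (creationClique G e k v) :=
  ⟨h.isClique_creationClique v, fun _ hR hsub => Finset.eq_of_subset_of_card_le hsub
    ((h.card_le_of_isClique hR).trans_eq (h.card_creationClique v).symm)⟩

lemma exists_eq_creationClique {Q : Finset V} (hQ : IsMaximalClique G Q) :
    ∃ v, k ≤ (e.symm v : ℕ) ∧ Q = creationClique G e k v := by
  obtain ⟨v, hv, hsub⟩ := h.exists_subset_creationClique hQ.1
  exact ⟨v, hv, hQ.2 _ (h.isClique_creationClique v) hsub⟩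

lemma card_of_isMaximalClique {Q : Finset V} (hQ : IsMaximalClique G Q) : Q.card = k + 1 := by
  obtain ⟨v, -, rfl⟩ := h.exists_eq_creationClique hQ
  exact h.card_creationClique v

lemma natCard_maxClique : Nat.card (MaxClique G) = Fintype.card V - k := by
  have himage : {Q | IsMaximalClique G Q} = creationClique G e k '' {v | k ≤ (e.symm v : ℕ)} := by
    ext Q
    refine ⟨fun hQ => ?_, ?_⟩
    · obtain ⟨v, hv, rfl⟩ := h.exists_eq_creationClique hQ
      exact ⟨v, hv, rfl⟩
    · rintro ⟨v, -, rfl⟩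
      exact h.isMaximalClique_creationClique v
  have hrank : Finset.card {v : V | k ≤ (e.symm v : ℕ)} =
      Finset.card {i : Fin (Fintype.card V) | k ≤ (i : ℕ)} :=
    Finset.card_equiv e.symm (by simp)
  have hsplit := Finset.card_filter_add_card_filter_not (s := Finset.univ)
    (fun i : Fin (Fintype.card V) => (i : ℕ) < k)
  simp only [Fin.card_filter_val_lt, not_lt, Finset.card_univ, Fintype.card_fin] at hsplit
  rw [show Nat.card (MaxClique G) = {Q | IsMaximalClique G Q}.ncard from Nat.card_coe_set_eq _,
    himage, injOn_creationClique.ncard_image, Set.ncard_eq_toFinset_card', Set.toFinset_ofPred,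
    hrank]
  omega

variable {T : SimpleGraph (MaxClique G)} (hT : IsCliqueTree G T)
include hT

lemma card_inter_of_adj {Q Q' : MaxClique G} (hadj : T.Adj Q Q') : (Q.1 ∩ Q'.1).card = k := by
  obtain ⟨u, w, hS⟩ := hT.exists_isUVSeparator_inter hadj
  obtain ⟨x, hxQ, hxQ'⟩ := MaxClique.exists_mem_notMem_of_ne hadj.ne
  have hlt : (Q.1 ∩ Q'.1).card < Q.1.card := Finset.card_lt_card
    ⟨Finset.inter_subset_left, fun hsub => hxQ' (Finset.mem_inter.1 (hsub hxQ)).2⟩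
  rw [h.card_of_isMaximalClique Q.2] at hlt
  exact le_antisymm (by omega) (h.le_card_of_isUVSeparator hS)

lemma isMinVtxSep_inter_of_adj {Q Q' : MaxClique G} (hadj : T.Adj Q Q') :
    IsMinVtxSep G (Q.1 ∩ Q'.1) := by
  obtain ⟨u, w, hS⟩ := hT.exists_isUVSeparator_inter hadj
  exact h.isMinVtxSep_of_isUVSeparator hS (h.card_inter_of_adj hT hadj)

lemma existsUnique_isSimplicial_of_deg_eq_one {Q : MaxClique G} (hQ : deg T Q = 1) :
    ∃! x, x ∈ Q.1 ∧ IsSimplicial G x := by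
  obtain ⟨Q', hQQ', hQ'⟩ := deg_eq_one_iff.1 hQ
  obtain ⟨x, hx⟩ : ∃ x, Q.1 \ Q'.1 = {x} := Finset.card_eq_one.1 (by
    have := Finset.card_sdiff_add_card_inter Q.1 Q'.1
    rw [h.card_of_isMaximalClique Q.2, h.card_inter_of_adj hT hQQ'] at this
    omega)
  obtain ⟨hxQ, hxQ'⟩ := Finset.mem_sdiff.1 (hx ▸ Finset.mem_singleton_self x)
  have hxs : IsSimplicial G x := isSimplicial_of_forall_isMaximalClique_eq Q.2 fun R hR hxR => by
    by_contra hne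
    obtain ⟨Q'', hQQ'', hxQ''⟩ := hT.exists_adj_mem (R := ⟨R, hR⟩) hxQ hxR
      fun h => hne (congrArg Subtype.val h).symm
    exact hxQ' (hQ' Q'' hQQ'' ▸ hxQ'')
  refine ⟨x, ⟨hxQ, hxs⟩, fun y ⟨hyQ, hys⟩ => ?_⟩
  have hyQ' : y ∉ Q'.1 := fun hyQ' =>
    hQQ'.ne (Subtype.ext (hys.eq_of_isMaximalClique Q.2 Q'.2 hyQ hyQ'))
  exact Finset.mem_singleton.1 (hx ▸ Finset.mem_sdiff.2 ⟨hyQ, hyQ'⟩)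

variable (hU : ∃! T : SimpleGraph (MaxClique G), IsCliqueTree G T)
include hU

lemma deg_le (Q : MaxClique G) : deg T Q ≤ k + 1 := by
  have hmaps : ∀ R ∈ {R | T.Adj Q R}, Q.1 ∩ R.1 ∈ (Q.1.powersetCard k : Set (Finset V)) :=
    fun R hR => Finset.mem_powersetCard.2 ⟨Finset.inter_subset_left, h.card_inter_of_adj hT hR⟩
  have hinj : Set.InjOn (fun R : MaxClique G => Q.1 ∩ R.1) {R | T.Adj Q R} :=
    fun R₁ hR₁ R₂ hR₂ heq =>
      hT.eq_of_adj_of_inter_subset hU hR₁ hR₂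
        ((show Q.1 ∩ R₂.1 = Q.1 ∩ R₁.1 from heq.symm) ▸ Finset.inter_subset_right)
  calc deg T Q ≤ (Q.1.powersetCard k : Set (Finset V)).ncard :=
        Set.ncard_le_ncard_of_injOn _ hmaps hinj
    _ = k + 1 := by
      rw [Set.ncard_coe_finset, Finset.card_powersetCard, h.card_of_isMaximalClique Q.2,
        Nat.choose_succ_self_right]

lemma deg_eq_one_of_isSimplicial (hn : k + 1 < Fintype.card V) {v : V} (hv : IsSimplicial G v)
    {Q : MaxClique G} (hvQ : v ∈ Q.1) : deg T Q = 1 := by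
  have hinter : ∀ R, T.Adj Q R → Q.1 ∩ R.1 = Q.1.erase v := fun R hR => by
    have hvR : v ∉ R.1 := fun hvR =>
      hR.ne (Subtype.ext (hv.eq_of_isMaximalClique Q.2 R.2 hvQ hvR))
    refine Finset.eq_of_subset_of_card_le
      (fun x hx => Finset.mem_erase.2 ⟨?_, (Finset.mem_inter.1 hx).1⟩) ?_
    · rintro rfl
      exact hvR (Finset.mem_inter.1 hx).2
    · rw [Finset.card_erase_of_mem hvQ, h.card_of_isMaximalClique Q.2,
        h.card_inter_of_adj hT hR, Nat.add_sub_cancel]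
  have : Nontrivial (MaxClique G) :=
    Finite.one_lt_card_iff_nontrivial.1 (by rw [h.natCard_maxClique]; omega)
  obtain ⟨R, hR⟩ := exists_ne Q
  obtain ⟨Q', hQQ'⟩ := (hT.1.connected.preconnected Q R).nonempty_neighborSet_left hR.symm
  refine deg_eq_one_iff.2 ⟨Q', hQQ', fun R' hR' => hT.eq_of_adj_of_inter_subset hU hR' hQQ' ?_⟩
  rw [hinter Q' hQQ', ← hinter R' hR']
  exact Finset.inter_subset_right

lemma ncard_deg_eq_one (hn : k + 1 < Fintype.card V) :
    {q : MaxClique G | deg T q = 1}.ncard = {v | IsSimplicial G v}.ncard := by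
  have hx := fun q (hq : deg T q = 1) =>
    (h.existsUnique_isSimplicial_of_deg_eq_one hT hq).exists.choose_spec
  refine Set.ncard_congr
    (fun q hq => (h.existsUnique_isSimplicial_of_deg_eq_one hT hq).exists.choose)
    (fun q hq => (hx q hq).2) (fun q₁ q₂ hq₁ hq₂ heq => ?_) (fun v hv => ?_)
  · exact Subtype.ext ((hx q₁ hq₁).2.eq_of_isMaximalClique q₁.2 q₂.2 (hx q₁ hq₁).1
      (heq ▸ (hx q₂ hq₂).1))
  · obtain ⟨Q, hQ, hvQ⟩ := exists_isMaximalClique_mem (G := G) v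
    have hleaf := h.deg_eq_one_of_isSimplicial hT hU hn hv (Q := ⟨Q, hQ⟩) hvQ
    exact ⟨⟨Q, hQ⟩, hleaf,
      (h.existsUnique_isSimplicial_of_deg_eq_one hT hleaf).unique (hx _ hleaf) ⟨hvQ, hv⟩⟩

lemma exists_isMinVtxSep_mem (hn : k + 1 < Fintype.card V) {v : V}
    (hv : ∀ q : MaxClique G, v ∈ q.1 → deg T q ≠ 1) : ∃ S, IsMinVtxSep G S ∧ v ∈ S := by
  obtain ⟨Q, hQ, hvQ⟩ := exists_isMaximalClique_mem (G := G) v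
  by_cases hs : IsSimplicial G v
  · exact absurd (h.deg_eq_one_of_isSimplicial hT hU hn hs (Q := ⟨Q, hQ⟩) hvQ) (hv ⟨Q, hQ⟩ hvQ)
  obtain ⟨R, hR, hvR, hRQ⟩ : ∃ R, IsMaximalClique G R ∧ v ∈ R ∧ R ≠ Q := by
    by_contra! hR
    exact hs (isSimplicial_of_forall_isMaximalClique_eq hQ hR)
  obtain ⟨Q', hQQ', hvQ'⟩ := hT.exists_adj_mem (Q := ⟨Q, hQ⟩) (R := ⟨R, hR⟩) hvQ hvR
    fun h => hRQ (congrArg Subtype.val h).symm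
  exact ⟨_, h.isMinVtxSep_inter_of_adj hT hQQ', Finset.mem_inter.2 ⟨hvQ, hvQ'⟩⟩

end IsKTreeOrder

end KTree

end RanTough

theorem ran_cliqueTree_structure_general {V : Type*} [Fintype V]
    (G : SimpleGraph V) (hG : IsRAN G) (hnc : G ≠ ⊤)
    (T : SimpleGraph {Q : Finset V // IsMaximalClique G Q}) (hT : IsCliqueTree G T) :
    Nat.card {Q : Finset V // IsMaximalClique G Q} = Fintype.card V - 3 ∧
    T.edgeSet.ncard = Fintype.card V - 4 ∧
    {q : {Q : Finset V // IsMaximalClique G Q} | deg T q = 1}.ncard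
      = {v : V | IsSimplicial G v}.ncard ∧
    (∀ v : V,
      (∀ q : {Q : Finset V // IsMaximalClique G Q}, v ∈ (q : Finset V) → deg T q ≠ 1) →
      ∃ S : Finset V, IsMinVtxSep G S ∧ v ∈ S) ∧
    (∀ q : {Q : Finset V // IsMaximalClique G Q}, deg T q ≤ 4) := by
  classical
  obtain ⟨e, he⟩ := hG.1.exists_isKTreeOrder
  have hn := he.lt_card_of_ne_top hnc
  have hcard : Nat.card {Q : Finset V // IsMaximalClique G Q} = Fintype.card V - 3 :=
    he.natCard_maxClique
  have hedges := (isTree_iff_connected_and_card.1 hT.1).2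
  refine ⟨hcard, ?_, he.ncard_deg_eq_one hT hG.2 hn,
    fun v hv => he.exists_isMinVtxSep_mem hT hG.2 hn hv, he.deg_le hT hG.2⟩
  rw [← Nat.card_coe_set_eq]
  omega

/-- Structure of the clique-tree of a non-complete RAN. -/
theorem ran_cliqueTree_structure {V : Type*} [Fintype V] [DecidableEq V]
    (G : SimpleGraph V) (hG : IsRAN G) (hnc : G ≠ ⊤)
    (T : SimpleGraph {Q : Finset V // IsMaximalClique G Q}) (hT : IsCliqueTree G T) :
    Nat.card {Q : Finset V // IsMaximalClique G Q} = Fintype.card V - 3 ∧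
    T.edgeSet.ncard = Fintype.card V - 4 ∧
    {q : {Q : Finset V // IsMaximalClique G Q} | deg T q = 1}.ncard
      = {v : V | IsSimplicial G v}.ncard ∧
    (∀ v : V,
      (∀ q : {Q : Finset V // IsMaximalClique G Q}, v ∈ (q : Finset V) → deg T q ≠ 1) →
      ∃ S : Finset V, IsMinVtxSep G S ∧ v ∈ S) ∧
    (∀ q : {Q : Finset V // IsMaximalClique G Q}, deg T q ≤ 4) :=
  ran_cliqueTree_structure_general G hG hnc T hT
end
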